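/- arXiv:2009.13728 — 5 statements merged into one kernel-verified Lean document; each statement's English description precedes it below -/
import Mathlib

section
/- Let a, b, c be real constants with 0 < a ≤ b ≤ 1 + a and b < c. Then x·F(a+1,b+1;c+1;−x)/F(a+1,b;c;−x) tends to +∞ as the real variable x tends to +∞. -/
/-!
Write `w_x(t) = t^(b-1) (1-t)^(c-b-1) (1+tx)^(-a-1)`. Since `t w_x` is `w_x` with `b, c` raised
by one, the quotient equals `(c/b) · x ∫ t w_x / ∫ w_x`: `x` times the mean of `t` under `w_x`.
On `[1/2, 1]` the mass of `w_x` is at most twice its first moment, while on `[0, 1/2]` the factor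
`(1-t)^(c-b-1)` lies between `2^(-|c-b-1|)` and `2^|c-b-1|`. After the substitution `s = tx` it
remains to show `I_b(y) / I_(b-1)(y) → ∞` for `I_p(y) = ∫₀^y s^p (1+s)^(-a-1) ds`. This
follows from `I_b(y) ≥ R (I_(b-1)(y) - I_(b-1)(R))` for every `R ≥ 0` and from
`I_b(y) ≥ 2^(-a-1) log y`.
-/

open Complex Filter MeasureTheory Metric Set
/-- Euler integral representation of the hypergeometric function, valid for
real arguments `x ∉ [1,∞)` when `0 < b < c`. -/
noncomputable def hyperFE (a b c x : ℝ) : ℝ :=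
  (Real.Gamma c / (Real.Gamma b * Real.Gamma (c - b))) *
    ∫ t in (0:ℝ)..1, t ^ (b - 1) * (1 - t) ^ (c - b - 1) * (1 - t * x) ^ (-a)

open scoped Topology

theorem tendsto_div_atTop_of_le_mul_sub {F G : ℝ → ℝ} (hF : Tendsto F atTop atTop)
    (hG : ∀ᶠ y in atTop, 0 < G y)
    (hFG : ∀ R, 0 ≤ R → ∀ᶠ y in atTop, R * (G y - G R) ≤ F y) :
    Tendsto (fun y => F y / G y) atTop atTop := by
  refine tendsto_atTop.2 fun C => ?_
  set C' := max C 0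
  have hC : C ≤ C' := le_max_left C 0
  have hC' : 0 ≤ C' := le_max_right C 0
  filter_upwards [hG, hFG (2 * C') (by positivity),
    hF.eventually_ge_atTop (2 * C' * G (2 * C'))] with y hGy hRy hFy
  rw [le_div_iff₀ hGy]
  -- With `R = 2 C'`: if `G y ≥ 2 G R` then `F y ≥ R G y / 2`, else `F y ≥ R G R > C' G y`.
  rcases le_or_gt (2 * G (2 * C')) (G y) with h | h
  · nlinarith [mul_le_mul_of_nonneg_left h hC']
  · nlinarith [mul_le_mul_of_nonneg_left h.le hC']

theorem rpow_mem_Icc_of_mem_Icc_half_one {u : ℝ} (hu : u ∈ Icc (1 / 2 : ℝ) 1) (q : ℝ) :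
    u ^ q ∈ Icc ((2 : ℝ) ^ (-|q|)) (2 ^ |q|) := by
  have hu0 : 0 < u := by linarith [hu.1]
  have hlog : |Real.log u| ≤ Real.log 2 := by
    rw [abs_of_nonpos (Real.log_nonpos hu0.le hu.2), neg_le, ← Real.log_inv]
    exact Real.log_le_log (by norm_num) (by linarith [hu.1])
  have h : |Real.log u * q| ≤ Real.log 2 * |q| := by
    rw [abs_mul]; exact mul_le_mul_of_nonneg_right hlog (abs_nonneg q)
  rw [Real.rpow_def_of_pos hu0, Real.rpow_def_of_pos two_pos, Real.rpow_def_of_pos two_pos]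
  constructor <;> apply Real.exp_le_exp.2 <;> linarith [abs_le.1 h]

theorem continuousOn_one_add_mul_rpow {x u v : ℝ} (hx : 0 ≤ x) (hu : 0 ≤ u) (hv : 0 ≤ v)
    (k : ℝ) :
    ContinuousOn (fun t : ℝ => (1 + t * x) ^ (-k)) (uIcc u v) :=
  (Continuous.continuousOn (by fun_prop)).rpow_const fun t ht =>
    Or.inl (by nlinarith [(le_min hu hv).trans ht.1] : 1 + t * x ≠ 0)

theorem intervalIntegrable_rpow_mul_one_add_mul_rpow {p x u v : ℝ} (hp : -1 < p) (hx : 0 ≤ x)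
    (hu : 0 ≤ u) (hv : 0 ≤ v) (k : ℝ) :
    IntervalIntegrable (fun t : ℝ => t ^ p * (1 + t * x) ^ (-k)) volume u v :=
  (intervalIntegral.intervalIntegrable_rpow' hp).mul_continuousOn
    (continuousOn_one_add_mul_rpow hx hu hv k)

noncomputable def betaPrimeIntegral (p k y : ℝ) : ℝ :=
  ∫ s in (0:ℝ)..y, s ^ p * (1 + s) ^ (-k)

theorem integral_rpow_mul_one_add_mul_rpow {p x u : ℝ} (hx : 0 < x) (hu : 0 ≤ u) (k : ℝ) :
    ∫ t in (0:ℝ)..u, t ^ p * (1 + t * x) ^ (-k) =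
      x ^ (-(p + 1)) * betaPrimeIntegral p k (x * u) := by
  have h : ∀ t ∈ uIcc 0 u, t ^ p * (1 + t * x) ^ (-k) =
      x ^ (-p) * ((x * t) ^ p * (1 + x * t) ^ (-k)) := by
    intro t ht
    rw [uIcc_of_le hu] at ht
    rw [Real.mul_rpow hx.le ht.1, Real.rpow_neg hx.le, mul_comm t x]
    field_simp
  rw [intervalIntegral.integral_congr h, intervalIntegral.integral_const_mul,
    intervalIntegral.integral_comp_mul_left (fun s => s ^ p * (1 + s) ^ (-k)) hx.ne', mul_zero,
    smul_eq_mul, ← mul_assoc, neg_add, Real.rpow_add hx, Real.rpow_neg_one]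
  rfl

namespace betaPrimeIntegral

variable {p k : ℝ}

theorem intervalIntegrable (hp : -1 < p) {u v : ℝ} (hu : 0 ≤ u) (hv : 0 ≤ v) :
    IntervalIntegrable (fun s : ℝ => s ^ p * (1 + s) ^ (-k)) volume u v := by
  simpa using intervalIntegrable_rpow_mul_one_add_mul_rpow hp zero_le_one hu hv k

theorem pos (hp : -1 < p) {y : ℝ} (hy : 0 < y) : 0 < betaPrimeIntegral p k y :=
  intervalIntegral.intervalIntegral_pos_of_pos_on (intervalIntegrable hp le_rfl hy.le)
    (fun s hs => by have := hs.1; positivity) hy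

theorem integral_le {u y : ℝ} (hp : -1 < p) (hu : 0 ≤ u) (huy : u ≤ y) :
    ∫ s in u..y, s ^ p * (1 + s) ^ (-k) ≤ betaPrimeIntegral p k y :=
  intervalIntegral.integral_mono_interval hu huy le_rfl
    (ae_restrict_of_forall_mem measurableSet_Ioc fun s hs => by have := hs.1.le; positivity)
    (intervalIntegrable hp le_rfl (hu.trans huy))

theorem mul_sub_le (hp : 0 < p) {R y : ℝ} (hR : 0 ≤ R) (hRy : R ≤ y) :
    R * (betaPrimeIntegral (p - 1) k y - betaPrimeIntegral (p - 1) k R) ≤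
      betaPrimeIntegral p k y := by
  have hp' : -1 < p - 1 := by linarith
  have hy : 0 ≤ y := hR.trans hRy
  unfold betaPrimeIntegral
  rw [intervalIntegral.integral_interval_sub_left (intervalIntegrable hp' le_rfl hy)
    (intervalIntegrable hp' le_rfl hR), ← intervalIntegral.integral_const_mul]
  calc ∫ s in R..y, R * (s ^ (p - 1) * (1 + s) ^ (-k))
      ≤ ∫ s in R..y, s ^ p * (1 + s) ^ (-k) := by
        refine intervalIntegral.integral_mono_on hRy ((intervalIntegrable hp' hR hy).const_mul R)
          (intervalIntegrable (by linarith) hR hy) fun s hs => ?_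
        have hs0 : 0 ≤ s := hR.trans hs.1
        rw [← sub_add_cancel p 1, Real.rpow_add_one' hs0 (by linarith), sub_add_cancel,
          mul_right_comm, mul_comm _ s]
        exact mul_le_mul_of_nonneg_right hs.1 (by positivity)
    _ ≤ _ := integral_le (by linarith) hR hRy

theorem tendsto_atTop (hp : -1 < p) (hk : 0 ≤ k) (hkp : k ≤ p + 1) :
    Tendsto (betaPrimeIntegral p k) atTop atTop := by
  refine tendsto_atTop_mono' atTop ?_ (Real.tendsto_log_atTop.const_mul_atTop
    (Real.rpow_pos_of_pos two_pos (-k)))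
  filter_upwards [eventually_ge_atTop 1] with y hy
  have hbound : ∀ s ∈ Icc (1 : ℝ) y,
      (2 : ℝ) ^ (-k) * s⁻¹ ≤ s ^ p * (1 + s) ^ (-k) := by
    intro s hs
    have hs0 : 0 < s := by linarith [hs.1]
    calc (2 : ℝ) ^ (-k) * s⁻¹ ≤ (2 : ℝ) ^ (-k) * s ^ (p - k) := by
          rw [← Real.rpow_neg_one]
          gcongr
          · exact hs.1
          · linarith
      _ = s ^ p * (2 * s) ^ (-k) := by
          rw [Real.mul_rpow two_pos.le hs0.le, sub_eq_add_neg, Real.rpow_add hs0]; ring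
      _ ≤ s ^ p * (1 + s) ^ (-k) := by
          gcongr ?_ * ?_
          exact Real.rpow_le_rpow_of_nonpos (by linarith) (by linarith [hs.1]) (by linarith)
  calc (2 : ℝ) ^ (-k) * Real.log y = ∫ s in (1:ℝ)..y, (2 : ℝ) ^ (-k) * s⁻¹ := by
        rw [intervalIntegral.integral_const_mul, integral_inv_of_pos one_pos (by linarith),
          div_one]
    _ ≤ ∫ s in (1:ℝ)..y, s ^ p * (1 + s) ^ (-k) :=
        intervalIntegral.integral_mono_on hy
          ((intervalIntegral.intervalIntegrable_inv (fun s hs => by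
            rw [uIcc_of_le hy] at hs; exact (zero_lt_one.trans_le hs.1).ne')
            continuousOn_id).const_mul _)
          (intervalIntegrable hp zero_le_one (by linarith)) hbound
    _ ≤ betaPrimeIntegral p k y := integral_le hp zero_le_one hy

end betaPrimeIntegral

noncomputable def eulerWeight (k b c x t : ℝ) : ℝ :=
  t ^ (b - 1) * (1 - t) ^ (c - b - 1) * (1 + t * x) ^ (-k)

theorem hyperFE_neg (k b c x : ℝ) :
    hyperFE k b c (-x) = Real.Gamma c / (Real.Gamma b * Real.Gamma (c - b)) *
      ∫ t in (0:ℝ)..1, eulerWeight k b c x t := by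
  simp only [hyperFE, eulerWeight, mul_neg, sub_neg_eq_add]

theorem mul_eulerWeight {k b c x t : ℝ} (hb : b ≠ 0) (ht : 0 ≤ t) :
    t * eulerWeight k b c x t = eulerWeight k (b + 1) (c + 1) x t := by
  have h : t ^ b = t * t ^ (b - 1) := by
    rw [← sub_add_cancel b 1, Real.rpow_add_one' ht (by simpa using hb), mul_comm]; simp
  simp only [eulerWeight, add_sub_cancel_right, add_sub_add_right_eq_sub, h]
  ring

namespace eulerWeight

variable {k b c x : ℝ}

theorem pos (hx : 0 ≤ x) {t : ℝ} (ht : t ∈ Ioo 0 1) : 0 < eulerWeight k b c x t := by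
  have := ht.1; have : 0 < 1 - t := sub_pos.2 ht.2
  unfold eulerWeight; positivity

theorem nonneg (hx : 0 ≤ x) {t : ℝ} (ht : t ∈ Icc 0 1) : 0 ≤ eulerWeight k b c x t := by
  have := ht.1; have : 0 ≤ 1 - t := sub_nonneg.2 ht.2
  unfold eulerWeight; positivity

theorem intervalIntegrable_zero_half (hb : 0 < b) (hx : 0 ≤ x) :
    IntervalIntegrable (eulerWeight k b c x) volume 0 (1 / 2) := by
  have hI : uIcc (0 : ℝ) (1 / 2) = Icc 0 (1 / 2) := uIcc_of_le (by norm_num)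
  refine ((intervalIntegral.intervalIntegrable_rpow' (by linarith : -1 < b - 1)).mul_continuousOn
    ?_).mul_continuousOn (continuousOn_one_add_mul_rpow hx le_rfl (by norm_num) k)
  exact (Continuous.continuousOn (by fun_prop)).rpow_const fun t ht => by
    rw [hI] at ht; exact Or.inl (by linarith [ht.2])

theorem intervalIntegrable_half_one (hbc : b < c) (hx : 0 ≤ x) :
    IntervalIntegrable (eulerWeight k b c x) volume (1 / 2) 1 := by
  have hI : uIcc (1 / 2 : ℝ) 1 = Icc (1 / 2) 1 := uIcc_of_le (by norm_num)
  have h : IntervalIntegrable (fun t : ℝ => (1 - t) ^ (c - b - 1)) volume (1 / 2) 1 := by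
    have h := ((intervalIntegral.intervalIntegrable_rpow' (by linarith : -1 < c - b - 1))
      |>.comp_sub_left 1 (a := 0) (b := 1 / 2)).symm
    rwa [sub_zero, show (1 : ℝ) - 1 / 2 = 1 / 2 by norm_num] at h
  refine (h.continuousOn_mul ?_).mul_continuousOn
    (continuousOn_one_add_mul_rpow hx (by norm_num) zero_le_one k)
  exact (Continuous.continuousOn (by fun_prop)).rpow_const fun t ht => by
    rw [hI] at ht; exact Or.inl (by linarith [ht.1])

theorem intervalIntegrable (hb : 0 < b) (hbc : b < c) (hx : 0 ≤ x) :
    IntervalIntegrable (eulerWeight k b c x) volume 0 1 :=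
  (intervalIntegrable_zero_half hb hx).trans (intervalIntegrable_half_one hbc hx)

theorem integral_le (hb : 0 < b) (hbc : b < c) (hx : 0 ≤ x) :
    ∫ t in (0:ℝ)..1, eulerWeight k b c x t ≤
      2 ^ |c - b - 1| * (∫ t in (0:ℝ)..1 / 2, t ^ (b - 1) * (1 + t * x) ^ (-k)) +
        2 * ∫ t in (0:ℝ)..1, t * eulerWeight k b c x t := by
  have h0 := intervalIntegrable_zero_half (k := k) (c := c) hb hx
  have h1 := intervalIntegrable_half_one (k := k) hbc hx
  have hm1 := h1.continuousOn_mul continuousOn_id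
  rw [← intervalIntegral.integral_add_adjacent_intervals h0 h1]
  apply add_le_add
  · rw [← intervalIntegral.integral_const_mul]
    refine intervalIntegral.integral_mono_on (by norm_num) h0
      ((intervalIntegrable_rpow_mul_one_add_mul_rpow (by linarith) hx le_rfl (by norm_num)
        k).const_mul _) fun t ht => ?_
    have hq := (rpow_mem_Icc_of_mem_Icc_half_one (u := 1 - t)
      ⟨by linarith [ht.2], by linarith [ht.1]⟩ (c - b - 1)).2
    have := ht.1
    calc eulerWeight k b c x t
        = (1 - t) ^ (c - b - 1) * (t ^ (b - 1) * (1 + t * x) ^ (-k)) := by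
          unfold eulerWeight; ring
      _ ≤ 2 ^ |c - b - 1| * (t ^ (b - 1) * (1 + t * x) ^ (-k)) := by gcongr
  · calc ∫ t in (1 / 2 : ℝ)..1, eulerWeight k b c x t
        ≤ ∫ t in (1 / 2 : ℝ)..1, 2 * (t * eulerWeight k b c x t) :=
          intervalIntegral.integral_mono_on (by norm_num) h1 (hm1.const_mul 2) fun t ht => by
            nlinarith [nonneg (k := k) (b := b) (c := c) hx ⟨by linarith [ht.1], ht.2⟩, ht.1]
      _ = 2 * ∫ t in (1 / 2 : ℝ)..1, t * eulerWeight k b c x t :=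
          intervalIntegral.integral_const_mul _ _
      _ ≤ 2 * ∫ t in (0:ℝ)..1, t * eulerWeight k b c x t := by
          gcongr
          exact intervalIntegral.integral_mono_interval (by norm_num) (by norm_num) le_rfl
            (ae_restrict_of_forall_mem measurableSet_Ioc fun t ht =>
              mul_nonneg ht.1.le (nonneg hx ⟨ht.1.le, ht.2⟩))
            ((intervalIntegrable hb hbc hx).continuousOn_mul continuousOn_id)

theorem le_integral_id_mul (hb : 0 < b) (hbc : b < c) (hx : 0 ≤ x) :
    2 ^ (-|c - b - 1|) * ∫ t in (0:ℝ)..1 / 2, t ^ b * (1 + t * x) ^ (-k) ≤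
      ∫ t in (0:ℝ)..1, t * eulerWeight k b c x t := by
  rw [← intervalIntegral.integral_const_mul]
  calc ∫ t in (0:ℝ)..1 / 2, 2 ^ (-|c - b - 1|) * (t ^ b * (1 + t * x) ^ (-k))
      ≤ ∫ t in (0:ℝ)..1 / 2, t * eulerWeight k b c x t := by
        refine intervalIntegral.integral_mono_on (by norm_num)
          ((intervalIntegrable_rpow_mul_one_add_mul_rpow (by linarith) hx le_rfl (by norm_num)
            k).const_mul _)
          ((intervalIntegrable_zero_half hb hx).continuousOn_mul continuousOn_id) fun t ht => ?_
        have hq := (rpow_mem_Icc_of_mem_Icc_half_one (u := 1 - t)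
          ⟨by linarith [ht.2], by linarith [ht.1]⟩ (c - b - 1)).1
        have := ht.1
        rw [mul_eulerWeight hb.ne' ht.1]
        simp only [eulerWeight, add_sub_cancel_right, add_sub_add_right_eq_sub]
        calc 2 ^ (-|c - b - 1|) * (t ^ b * (1 + t * x) ^ (-k))
            ≤ (1 - t) ^ (c - b - 1) * (t ^ b * (1 + t * x) ^ (-k)) := by gcongr
          _ = _ := by ring
    _ ≤ ∫ t in (0:ℝ)..1, t * eulerWeight k b c x t :=
        intervalIntegral.integral_mono_interval le_rfl (by norm_num) (by norm_num)
          (ae_restrict_of_forall_mem measurableSet_Ioc fun t ht =>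
            mul_nonneg ht.1.le (nonneg hx ⟨ht.1.le, ht.2⟩))
          ((intervalIntegrable hb hbc hx).continuousOn_mul continuousOn_id)

theorem integral_pos (hb : 0 < b) (hbc : b < c) (hx : 0 ≤ x) :
    0 < ∫ t in (0:ℝ)..1, eulerWeight k b c x t :=
  intervalIntegral.intervalIntegral_pos_of_pos_on (intervalIntegrable hb hbc hx)
    (fun _ ht => pos hx ht) zero_lt_one

theorem integral_id_mul_pos (hb : 0 < b) (hbc : b < c) (hx : 0 ≤ x) :
    0 < ∫ t in (0:ℝ)..1, t * eulerWeight k b c x t :=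
  intervalIntegral.intervalIntegral_pos_of_pos_on
    ((intervalIntegrable hb hbc hx).continuousOn_mul continuousOn_id)
    (fun _ ht => mul_pos ht.1 (pos hx ht)) zero_lt_one

theorem integral_div_pos (hb : 0 < b) (hbc : b < c) (hx : 0 < x) :
    0 < (∫ t in (0:ℝ)..1, eulerWeight k b c x t) /
      (x * ∫ t in (0:ℝ)..1, t * eulerWeight k b c x t) := by
  have := integral_pos (k := k) hb hbc hx.le
  have := integral_id_mul_pos (k := k) hb hbc hx.le
  positivity

theorem integral_div_le (hb : 0 < b) (hbc : b < c) (hx : 0 < x) :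
    (∫ t in (0:ℝ)..1, eulerWeight k b c x t) /
        (x * ∫ t in (0:ℝ)..1, t * eulerWeight k b c x t) ≤
      2 ^ |c - b - 1| / 2 ^ (-|c - b - 1|) *
        (betaPrimeIntegral (b - 1) k (x / 2) / betaPrimeIntegral b k (x / 2)) + 2 / x := by
  set D := ∫ t in (0:ℝ)..1, eulerWeight k b c x t
  set N := ∫ t in (0:ℝ)..1, t * eulerWeight k b c x t
  set F := betaPrimeIntegral b k (x / 2)
  set G := betaPrimeIntegral (b - 1) k (x / 2)
  have hF : 0 < F := betaPrimeIntegral.pos (by linarith) (by positivity)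
  have hG : 0 < G := betaPrimeIntegral.pos (by linarith) (by positivity)
  have hD : D ≤ 2 ^ |c - b - 1| * (x ^ (-b) * G) + 2 * N := by
    have h := integral_le (k := k) hb hbc hx.le
    rwa [integral_rpow_mul_one_add_mul_rpow hx (by norm_num), sub_add_cancel, mul_one_div] at h
  have hN : 2 ^ (-|c - b - 1|) * (x ^ (-b) * F) ≤ x * N := by
    have h := le_integral_id_mul (k := k) hb hbc hx.le
    rw [integral_rpow_mul_one_add_mul_rpow hx (by norm_num), mul_one_div] at h
    calc 2 ^ (-|c - b - 1|) * (x ^ (-b) * F)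
        = x * (2 ^ (-|c - b - 1|) * (x ^ (-(b + 1)) * F)) := by
          rw [neg_add, Real.rpow_add hx, Real.rpow_neg_one]; field_simp
      _ ≤ x * N := by gcongr
  have hN0 : 0 < 2 ^ (-|c - b - 1|) * (x ^ (-b) * F) := by positivity
  have hN' : 0 < N := integral_id_mul_pos hb hbc hx.le
  calc D / (x * N) ≤ (2 ^ |c - b - 1| * (x ^ (-b) * G) + 2 * N) / (x * N) := by gcongr
    _ = 2 ^ |c - b - 1| * (x ^ (-b) * G) / (x * N) + 2 / x := by
        rw [add_div, mul_div_mul_right _ _ hN'.ne']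
    _ ≤ 2 ^ |c - b - 1| * (x ^ (-b) * G) / (2 ^ (-|c - b - 1|) * (x ^ (-b) * F)) + 2 / x := by
        gcongr
    _ = _ := by field_simp

end eulerWeight

theorem mul_hyperFE_add_one_div_hyperFE {b c : ℝ} (hb : 0 < b) (hbc : b < c) (k x : ℝ) :
    x * hyperFE k (b + 1) (c + 1) (-x) / hyperFE k b c (-x) =
      c / b * (x * (∫ t in (0:ℝ)..1, t * eulerWeight k b c x t) /
        ∫ t in (0:ℝ)..1, eulerWeight k b c x t) := by
  have hc : 0 < c := hb.trans hbc
  have hΓ := Real.Gamma_pos_of_pos hc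
  have hΓ' := Real.Gamma_pos_of_pos hb
  have hΓ'' := Real.Gamma_pos_of_pos (sub_pos.2 hbc)
  rw [hyperFE_neg, hyperFE_neg, add_sub_add_right_eq_sub, Real.Gamma_add_one hc.ne',
    Real.Gamma_add_one hb.ne', mul_left_comm, mul_div_mul_comm,
    intervalIntegral.integral_congr fun t ht => (mul_eulerWeight (k := k) (c := c) (x := x)
      hb.ne' (by rw [uIcc_of_le zero_le_one] at ht; exact ht.1)).symm]
  congr 1
  field_simp

theorem tendsto_mul_integral_id_mul_div_integral {k b c : ℝ} (hk : 0 ≤ k)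
    (hb : 0 < b) (hbc : b < c) (hkb : k ≤ b + 1) :
    Tendsto (fun x => x * (∫ t in (0:ℝ)..1, t * eulerWeight k b c x t) /
      ∫ t in (0:ℝ)..1, eulerWeight k b c x t) atTop atTop := by
  have hFG : Tendsto (fun y => betaPrimeIntegral (b - 1) k y / betaPrimeIntegral b k y)
      atTop (𝓝 0) := by
    have h := tendsto_div_atTop_of_le_mul_sub
      (betaPrimeIntegral.tendsto_atTop (by linarith) hk hkb)
      ((eventually_gt_atTop 0).mono fun y hy => betaPrimeIntegral.pos (by linarith) hy)
      fun R hR => (eventually_ge_atTop R).mono fun y hy => betaPrimeIntegral.mul_sub_le hb hR hy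
    simpa only [Pi.inv_def, inv_div] using h.inv_tendsto_atTop
  have hbound : Tendsto (fun x => 2 ^ |c - b - 1| / 2 ^ (-|c - b - 1|) *
      (betaPrimeIntegral (b - 1) k (x / 2) / betaPrimeIntegral b k (x / 2)) + 2 / x)
      atTop (𝓝 0) := by
    simpa using ((hFG.comp (tendsto_id.atTop_div_const two_pos)).const_mul _).add
      (tendsto_const_nhds.div_atTop tendsto_id)
  have h : Tendsto (fun x => (∫ t in (0:ℝ)..1, eulerWeight k b c x t) /
      (x * ∫ t in (0:ℝ)..1, t * eulerWeight k b c x t)) atTop (𝓝[>] 0) := by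
    refine tendsto_nhdsWithin_iff.2 ⟨tendsto_of_tendsto_of_tendsto_of_le_of_le' tendsto_const_nhds
      hbound ?_ ?_, ?_⟩
    all_goals filter_upwards [eventually_gt_atTop 0] with x hx
    · exact (eulerWeight.integral_div_pos hb hbc hx).le
    · exact eulerWeight.integral_div_le hb hbc hx
    · exact eulerWeight.integral_div_pos hb hbc hx
  simpa only [Pi.inv_def, inv_div] using h.inv_tendsto_nhdsGT_zero

theorem stmt_5_general (a b c : ℝ) (ha : 0 < a) (hab : a ≤ b) (hbc : b < c) :
    Tendsto (fun x : ℝ =>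
        x * hyperFE (a + 1) (b + 1) (c + 1) (-x) / hyperFE (a + 1) b c (-x))
      atTop atTop := by
  have hb : 0 < b := ha.trans_le hab
  simp_rw [mul_hyperFE_add_one_div_hyperFE hb hbc]
  exact (tendsto_mul_integral_id_mul_div_integral (by linarith) hb hbc
    (by linarith)).const_mul_atTop (div_pos (hb.trans hbc) hb)

theorem stmt_5 (a b c : ℝ) (ha : 0 < a) (hab : a ≤ b) (hba : b ≤ 1 + a) (hbc : b < c) :
    Tendsto (fun x : ℝ =>
        x * hyperFE (a + 1) (b + 1) (c + 1) (-x) / hyperFE (a + 1) b c (-x))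
      atTop atTop :=
  stmt_5_general a b c ha hab hbc
end

section
/- Let a, b be positive real constants and c = 1 + a + b. Then there exist C > 0 and δ ∈ (0,1) such that for every z ∈ 𝔻 with |1 − z| < δ one has F(a,b;c;z) ≠ 0 and |F(a+1,b;c;z)/F(a,b;c;z) + b·Log(1 − z)| ≤ C, where Log denotes the principal branch of the complex logarithm. -/
open Complex Filter MeasureTheory Metric Set

/-- The Gaussian hypergeometric function on the unit disc (power series). -/
noncomputable def hyperF (a b c : ℝ) (z : ℂ) : ℂ :=
  ∑' n : ℕ, (((ascPochhammer ℝ n).eval a * (ascPochhammer ℝ n).eval b /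
      ((ascPochhammer ℝ n).eval c * (n.factorial : ℝ)) : ℝ) : ℂ) * z ^ n

open Finset.HasAntidiagonal

/-!
With `c = 1 + a + b` the coefficients `pₙ` of `F(a, b; c; z)` satisfy
`(n + 1)(n + c) pₙ₊₁ = a b ∑_{j ≤ n} pⱼ`. Hence `∑ pₙ < ∞` and `n² pₙ` is bounded, so `F` is
continuous on the closed disc with `F(1) = ∑ pₙ ≥ 1`, and `|F| ≥ 1/2` near `z = 1`.
The quotient equals `(F(a + 1, b; c; z) + b log (1 - z) F(a, b; c; z)) / F(a, b; c; z)`. The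
numerator has coefficients `pₙ (a + n) / a - b ∑_{k ≥ 1} pₙ₋ₖ / k`, which the same identity turns
into `-b (∑_{k + m = n - 1} pₘ m / (n (k + 1)) + pₙ / a)`. These are absolutely summable, since
`m / ((m + k + 1)(k + 1)) ≤ √m (k + 1)^(-3/2)` by AM-GM and `∑ √m pₘ < ∞`, so the numerator is
bounded on the disc.
-/

section PowerSeries

variable {f : ℕ → ℂ}

lemma summable_mul_pow_of_norm_le_one (hf : Summable fun n => ‖f n‖) {z : ℂ} (hz : ‖z‖ ≤ 1) :
    Summable fun n => f n * z ^ n :=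
  Summable.of_norm_bounded hf fun n => by
    rw [norm_mul, norm_pow]
    exact mul_le_of_le_one_right (norm_nonneg _) (pow_le_one₀ (norm_nonneg _) hz)

lemma continuousOn_tsum_mul_pow (hf : Summable fun n => ‖f n‖) :
    ContinuousOn (fun z => ∑' n, f n * z ^ n) (closedBall 0 1) :=
  continuousOn_tsum (fun n => (continuous_const.mul (continuous_pow n)).continuousOn) hf
    fun n z hz => by
      rw [norm_mul, norm_pow]
      exact mul_le_of_le_one_right (norm_nonneg _)
        (pow_le_one₀ (norm_nonneg _) (mem_closedBall_zero_iff.mp hz))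

lemma exists_norm_tsum_le_two_mul_norm_tsum_mul_pow (hf : Summable fun n => ‖f n‖) :
    ∃ δ ∈ Ioo (0 : ℝ) 1, ∀ z ∈ closedBall (0 : ℂ) 1, ‖1 - z‖ < δ →
      ‖∑' n, f n‖ ≤ 2 * ‖∑' n, f n * z ^ n‖ := by
  rcases (norm_nonneg (∑' n, f n)).eq_or_lt with h0 | hpos
  · exact ⟨1 / 2, by norm_num, fun z _ _ => by rw [← h0]; positivity⟩
  have hcont := continuousOn_tsum_mul_pow hf 1 (by simp)
  obtain ⟨δ, hδ, hnear⟩ := Metric.continuousWithinAt_iff.mp hcont _ (half_pos hpos)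
  refine ⟨min δ (1 / 2), ⟨by positivity, by linarith [min_le_right δ (1 / 2)]⟩, fun z hz hzδ => ?_⟩
  have hdist := hnear hz (by rw [dist_comm, dist_eq_norm]; exact hzδ.trans_le (min_le_left _ _))
  simp only [one_pow, mul_one, dist_eq_norm] at hdist
  linarith [norm_sub_norm_le (∑' n, f n) (∑' n, f n * z ^ n),
    norm_sub_rev (∑' n, f n * z ^ n) (∑' n, f n)]

lemma hasSum_neg_log_mul (hf : Summable fun n => ‖f n‖) {z : ℂ} (hz : ‖z‖ < 1) :
    HasSum (fun n : ℕ => (∑ x ∈ antidiagonal n, (x.1 : ℂ)⁻¹ * f x.2) * z ^ n)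
      (-log (1 - z) * ∑' n, f n * z ^ n) := by
  have hlog : Summable fun n : ℕ => ‖z ^ n / n‖ := by
    refine (summable_geometric_of_lt_one (norm_nonneg z) hz).of_nonneg_of_le
      (fun n => norm_nonneg _) fun n => ?_
    rw [norm_div, norm_pow, Complex.norm_natCast]
    rcases n.eq_zero_or_pos with rfl | hn
    · simp
    · exact div_le_self (by positivity) (by exact_mod_cast hn)
  have hfz : Summable fun n => ‖f n * z ^ n‖ :=
    (summable_mul_pow_of_norm_le_one hf hz.le).norm
  rw [← (hasSum_taylorSeries_neg_log hz).tsum_eq,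
    tsum_mul_tsum_eq_tsum_sum_antidiagonal_of_summable_norm hlog hfz]
  refine (summable_norm_sum_mul_antidiagonal_of_summable_norm hlog hfz).of_norm.hasSum.congr_fun
    fun n => ?_
  rw [Finset.sum_mul]
  refine Finset.sum_congr rfl fun x hx => ?_
  rw [← mem_antidiagonal.mp hx, pow_add]
  ring

end PowerSeries

lemma summable_sqrt_div_sq : Summable fun m : ℕ => √m / (m : ℝ) ^ 2 := by
  refine (Real.summable_nat_rpow_inv.mpr (by norm_num : (1 : ℝ) < 3 / 2)).congr fun m => ?_
  rcases m.eq_zero_or_pos with rfl | hm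
  · simp
  have hm : (0 : ℝ) < m := by exact_mod_cast hm
  rw [show (3 / 2 : ℝ) = 2 - 1 / 2 by norm_num, Real.rpow_sub hm, Real.rpow_two,
    ← Real.sqrt_eq_rpow, inv_div, div_eq_div_iff (by positivity) (by positivity)]

lemma div_add_mul_le_sqrt_mul_sqrt_div_sq {u v : ℝ} (hu : 0 ≤ u) (hv : 0 < v) :
    u / ((u + v) * v) ≤ √u * (√v / v ^ 2) := by
  have hsu := Real.sq_sqrt hu
  have hsv := Real.sq_sqrt hv.le
  have hamgm : √u * √v ≤ u + v := by nlinarith [sq_nonneg (√u - √v), Real.sqrt_nonneg u]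
  rw [mul_div_assoc', div_le_div_iff₀ (by positivity) (by positivity)]
  calc u * v ^ 2 = √u * (√u * √v) * (√v * v) := by
        linear_combination -(√v ^ 2 * v) * hsu - u * v * hsv
    _ ≤ √u * (u + v) * (√v * v) := by gcongr
    _ = √u * √v * ((u + v) * v) := by ring

noncomputable def hypCoeff (a b c : ℝ) (n : ℕ) : ℝ :=
  (ascPochhammer ℝ n).eval a * (ascPochhammer ℝ n).eval b /
    ((ascPochhammer ℝ n).eval c * (n.factorial : ℝ))

lemma hyperF_eq_tsum (a b c : ℝ) (z : ℂ) :
    hyperF a b c z = ∑' n, (hypCoeff a b c n : ℂ) * z ^ n := rfl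

section HypCoeff

variable {a b c : ℝ}

@[simp]
lemma hypCoeff_zero : hypCoeff a b c 0 = 1 := by simp [hypCoeff]

lemma hypCoeff_pos (ha : 0 < a) (hb : 0 < b) (hc : 0 < c) (n : ℕ) : 0 < hypCoeff a b c n := by
  have := ascPochhammer_pos n a ha
  have := ascPochhammer_pos n b hb
  have := ascPochhammer_pos n c hc
  unfold hypCoeff
  positivity

lemma hypCoeff_succ (hc : 0 < c) (n : ℕ) :
    hypCoeff a b c (n + 1) = hypCoeff a b c n * ((a + n) * (b + n)) / ((c + n) * (n + 1)) := by
  have := ascPochhammer_pos n c hc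
  have : 0 < c + n := by positivity
  rw [hypCoeff, hypCoeff, ascPochhammer_succ_eval, ascPochhammer_succ_eval, ascPochhammer_succ_eval,
    Nat.factorial_succ]
  push_cast
  field_simp

lemma hypCoeff_add_one_left_mul (n : ℕ) :
    hypCoeff (a + 1) b c n * a = hypCoeff a b c n * (a + n) := by
  have hpoch : (ascPochhammer ℝ n).eval (a + 1) * a = (ascPochhammer ℝ n).eval a * (a + n) := by
    rw [← ascPochhammer_succ_eval, ascPochhammer_succ_left]
    simp [mul_comm]
  simp only [hypCoeff, div_mul_eq_mul_div, mul_right_comm _ _ a, hpoch]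
  ring

end HypCoeff

section Balanced

variable {a b : ℝ}

lemma hypCoeff_one_add_add_pos (ha : 0 < a) (hb : 0 < b) (n : ℕ) :
    0 < hypCoeff a b (1 + a + b) n :=
  hypCoeff_pos ha hb (by linarith) n

/-- This is where `c = 1 + a + b` enters: `(n + 1)(n + 1 + a + b) + a b = (n + 1 + a)(n + 1 + b)`
makes the recurrence of the coefficients telescope. -/
lemma mul_hypCoeff_succ_eq_mul_sum (ha : 0 < a) (hb : 0 < b) (n : ℕ) :
    (n + 1) * (1 + a + b + n) * hypCoeff a b (1 + a + b) (n + 1) =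
      a * b * ∑ j ∈ Finset.range (n + 1), hypCoeff a b (1 + a + b) j := by
  have hc : 0 < 1 + a + b := by linarith
  induction n with
  | zero =>
    simp only [CharP.cast_eq_zero, zero_add, add_zero, one_mul, hypCoeff_succ hc, hypCoeff_zero,
      mul_one, Finset.range_one, Finset.sum_singleton]
    field_simp
  | succ n ih =>
    rw [Finset.sum_range_succ, mul_add (a * b), ← ih, hypCoeff_succ hc (n + 1)]
    have : 0 < 1 + a + b + (n + 1 : ℕ) := by positivity
    push_cast at this ⊢
    field_simp
    ring

lemma sum_range_hypCoeff_le (ha : 0 < a) (hb : 0 < b) (n : ℕ) :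
    ∑ j ∈ Finset.range (n + 1), hypCoeff a b (1 + a + b) j ≤
      Real.exp (2 * a * b * (n / (n + 1))) := by
  induction n with
  | zero => simp
  | succ n ih =>
    set s := ∑ j ∈ Finset.range (n + 1), hypCoeff a b (1 + a + b) j
    have hs : 0 ≤ s := Finset.sum_nonneg fun j _ => (hypCoeff_one_add_add_pos ha hb j).le
    have hnext :
        hypCoeff a b (1 + a + b) (n + 1) = s * (a * b / ((n + 1) * (1 + a + b + n))) := by
      rw [mul_div_assoc', eq_div_iff (by positivity), mul_comm s,
        ← mul_hypCoeff_succ_eq_mul_sum ha hb]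
      ring
    have hstep : 1 + a * b / ((n + 1) * (1 + a + b + n)) ≤
        Real.exp (2 * a * b / ((n + 1) * (n + 2))) := by
      refine le_trans ?_ (Real.add_one_le_exp _)
      rw [add_comm, add_le_add_iff_right, div_le_div_iff₀ (by positivity) (by positivity)]
      nlinarith [mul_pos (mul_pos ha hb) (show (0 : ℝ) < n + 1 by positivity)]
    rw [Finset.sum_range_succ, hnext, ← mul_one_add]
    calc s * (1 + a * b / ((n + 1) * (1 + a + b + n)))
        ≤ Real.exp (2 * a * b * (n / (n + 1))) * Real.exp (2 * a * b / ((n + 1) * (n + 2))) :=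
          mul_le_mul ih hstep (by positivity) (by positivity)
      _ = Real.exp (2 * a * b * ((n + 1 : ℕ) / ((n + 1 : ℕ) + 1))) := by
          rw [← Real.exp_add]
          congr 1
          push_cast
          field_simp
          ring

lemma sum_range_hypCoeff_le_exp (ha : 0 < a) (hb : 0 < b) (N : ℕ) :
    ∑ j ∈ Finset.range N, hypCoeff a b (1 + a + b) j ≤ Real.exp (2 * a * b) := by
  rcases N with _ | n
  · simp [(Real.exp_pos _).le]
  refine (sum_range_hypCoeff_le ha hb n).trans (Real.exp_le_exp.mpr ?_)
  have : (n : ℝ) / (n + 1) ≤ 1 := div_le_one_of_le₀ (by linarith) (by positivity)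
  have : 0 < 2 * a * b := by positivity
  nlinarith

lemma summable_hypCoeff (ha : 0 < a) (hb : 0 < b) : Summable (hypCoeff a b (1 + a + b)) :=
  summable_of_sum_range_le (fun n => (hypCoeff_one_add_add_pos ha hb n).le)
    (sum_range_hypCoeff_le_exp ha hb)

lemma sq_mul_hypCoeff_le (ha : 0 < a) (hb : 0 < b) (n : ℕ) :
    (n : ℝ) ^ 2 * hypCoeff a b (1 + a + b) n ≤ a * b * Real.exp (2 * a * b) := by
  rcases n with _ | n
  · rw [Nat.cast_zero, zero_pow two_ne_zero, zero_mul]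
    positivity
  have hp := hypCoeff_one_add_add_pos ha hb (n + 1)
  calc ((n + 1 : ℕ) : ℝ) ^ 2 * hypCoeff a b (1 + a + b) (n + 1)
      ≤ (n + 1) * (1 + a + b + n) * hypCoeff a b (1 + a + b) (n + 1) := by
        push_cast
        gcongr
        nlinarith
    _ ≤ a * b * Real.exp (2 * a * b) := by
        rw [mul_hypCoeff_succ_eq_mul_sum ha hb]
        gcongr
        exact sum_range_hypCoeff_le_exp ha hb _

end Balanced

section Remainder

variable {a b : ℝ}

/-- The Taylor coefficients of `F(a + 1, b; c; z) + b log (1 - z) F(a, b; c; z)`, `c = 1 + a + b`;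
the junk value `(0 : ℝ)⁻¹ = 0` is the vanishing constant term of `log (1 - z)`. -/
noncomputable def remCoeff (a b : ℝ) (n : ℕ) : ℝ :=
  hypCoeff (a + 1) b (1 + a + b) n -
    b * ∑ x ∈ antidiagonal n, (x.1 : ℝ)⁻¹ * hypCoeff a b (1 + a + b) x.2

@[simp]
lemma remCoeff_zero : remCoeff a b 0 = 1 := by simp [remCoeff]

lemma remCoeff_succ (ha : 0 < a) (hb : 0 < b) (n : ℕ) :
    remCoeff a b (n + 1) = -b * (∑ x ∈ antidiagonal n,
      hypCoeff a b (1 + a + b) x.2 * (x.2 / ((n + 1) * (x.1 + 1))) +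
        hypCoeff a b (1 + a + b) (n + 1) / a) := by
  set p := hypCoeff a b (1 + a + b)
  have hshift := hypCoeff_add_one_left_mul (a := a) (b := b) (c := 1 + a + b) (n + 1)
  have hrec := mul_hypCoeff_succ_eq_mul_sum ha hb n
  have hsum : ∑ x ∈ antidiagonal n, p x.2 = ∑ j ∈ Finset.range (n + 1), p j := by
    rw [← Finset.Nat.sum_antidiagonal_swap]
    exact Finset.Nat.sum_antidiagonal_eq_sum_range_succ (fun i _ => p i) n
  have hterm : ∀ x ∈ antidiagonal n, p x.2 * (x.2 / ((n + 1) * (x.1 + 1))) =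
      ((x.1 + 1 : ℕ) : ℝ)⁻¹ * p x.2 - p x.2 / (n + 1) := by
    intro x hx
    rw [← mem_antidiagonal.mp hx]
    push_cast
    field_simp
    ring
  rw [remCoeff, Finset.Nat.sum_antidiagonal_succ, Finset.sum_congr rfl hterm,
    Finset.sum_sub_distrib, ← Finset.sum_div, hsum]
  simp only [CharP.cast_eq_zero, inv_zero, zero_mul, zero_add]
  push_cast at hshift hrec ⊢
  field_simp
  linear_combination (n + 1) * hshift + hrec

lemma summable_hypCoeff_mul_sqrt (ha : 0 < a) (hb : 0 < b) :
    Summable fun m : ℕ => hypCoeff a b (1 + a + b) m * √m := by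
  refine (summable_sqrt_div_sq.mul_left (a * b * Real.exp (2 * a * b))).of_nonneg_of_le
    (fun m => mul_nonneg (hypCoeff_one_add_add_pos ha hb m).le (Real.sqrt_nonneg _)) fun m => ?_
  rcases m.eq_zero_or_pos with rfl | hm
  · simp
  have hm : (0 : ℝ) < m := by exact_mod_cast hm
  rw [mul_div_assoc', le_div_iff₀ (by positivity), mul_right_comm]
  exact mul_le_mul_of_nonneg_right (by linarith [sq_mul_hypCoeff_le ha hb m]) (Real.sqrt_nonneg _)

lemma summable_abs_remCoeff (ha : 0 < a) (hb : 0 < b) : Summable fun n => |remCoeff a b n| := by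
  set p := hypCoeff a b (1 + a + b)
  have hp := hypCoeff_one_add_add_pos ha hb
  have hq := summable_hypCoeff_mul_sqrt ha hb
  have hr : Summable fun k : ℕ => √((k : ℝ) + 1) / ((k : ℝ) + 1) ^ 2 := by
    simpa using (summable_nat_add_iff 1).mpr summable_sqrt_div_sq
  have hconv : Summable fun n : ℕ =>
      ∑ x ∈ antidiagonal n, √((x.1 : ℝ) + 1) / ((x.1 : ℝ) + 1) ^ 2 * (p x.2 * √x.2) :=
    summable_sum_mul_antidiagonal_of_summable_norm'
      (f := fun k : ℕ => √((k : ℝ) + 1) / ((k : ℝ) + 1) ^ 2) (g := fun m : ℕ => p m * √m)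
      hr.norm hr hq.norm hq
  rw [← summable_nat_add_iff 1]
  have hp' := ((summable_nat_add_iff 1).mpr (summable_hypCoeff ha hb)).div_const a
  refine ((hconv.add hp').mul_left b).of_nonneg_of_le (fun n => abs_nonneg _) fun n => ?_
  have hterm : ∀ x ∈ antidiagonal n, 0 ≤ p x.2 * (x.2 / ((n + 1) * (x.1 + 1))) := fun x _ => by
    have := hp x.2
    positivity
  rw [remCoeff_succ ha hb, abs_mul, abs_neg, abs_of_pos hb,
    abs_of_nonneg (add_nonneg (Finset.sum_nonneg hterm) (div_pos (hp _) ha).le)]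
  refine mul_le_mul_of_nonneg_left (add_le_add_left (Finset.sum_le_sum fun x hx => ?_) _) hb.le
  have hn : (n : ℝ) + 1 = x.2 + (x.1 + 1) := by
    rw [← mem_antidiagonal.mp hx]
    push_cast
    ring
  calc p x.2 * (x.2 / ((n + 1) * (x.1 + 1)))
      ≤ p x.2 * (√x.2 * (√((x.1 : ℝ) + 1) / ((x.1 : ℝ) + 1) ^ 2)) := by
        rw [hn]
        exact mul_le_mul_of_nonneg_left
          (div_add_mul_le_sqrt_mul_sqrt_div_sq (Nat.cast_nonneg _) (by positivity)) (hp _).le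
    _ = √((x.1 : ℝ) + 1) / ((x.1 : ℝ) + 1) ^ 2 * (p x.2 * √x.2) := by ring

end Remainder

section Assembly

variable {a b : ℝ}

lemma hasSum_remCoeff_mul_pow (ha : 0 < a) (hb : 0 < b) {z : ℂ} (hz : ‖z‖ < 1) :
    HasSum (fun n => (remCoeff a b n : ℂ) * z ^ n)
      (hyperF (a + 1) b (1 + a + b) z + b * log (1 - z) * hyperF a b (1 + a + b) z) := by
  have hp : Summable fun n => ‖(hypCoeff a b (1 + a + b) n : ℂ)‖ := by
    simpa only [Complex.norm_real] using (summable_hypCoeff ha hb).norm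
  have hr : Summable fun n => ‖(remCoeff a b n : ℂ)‖ := by
    simpa only [Complex.norm_real, Real.norm_eq_abs] using summable_abs_remCoeff ha hb
  have hrem := (summable_mul_pow_of_norm_le_one hr hz.le).hasSum
  have hlog := (hasSum_neg_log_mul hp hz).mul_left (b : ℂ)
  have hnum : hyperF (a + 1) b (1 + a + b) z =
      ∑' n, (remCoeff a b n : ℂ) * z ^ n - b * log (1 - z) * hyperF a b (1 + a + b) z := by
    rw [hyperF_eq_tsum, ((hrem.add hlog).congr_fun fun n => ?_).tsum_eq, hyperF_eq_tsum]
    · ring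
    simp only [remCoeff]
    push_cast
    ring
  rw [hnum, sub_add_cancel]
  exact hrem

lemma norm_hyperF_add_log_mul_le (ha : 0 < a) (hb : 0 < b) {z : ℂ} (hz : ‖z‖ < 1) :
    ‖hyperF (a + 1) b (1 + a + b) z + b * log (1 - z) * hyperF a b (1 + a + b) z‖ ≤
      ∑' n, |remCoeff a b n| :=
  (hasSum_remCoeff_mul_pow ha hb hz).norm_le_of_bounded (summable_abs_remCoeff ha hb).hasSum
    fun n => by
      rw [norm_mul, norm_pow, Complex.norm_real, Real.norm_eq_abs]
      exact mul_le_of_le_one_right (abs_nonneg _) (pow_le_one₀ (norm_nonneg _) hz.le)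

lemma exists_half_le_norm_hyperF (ha : 0 < a) (hb : 0 < b) :
    ∃ δ ∈ Ioo (0 : ℝ) 1, ∀ z ∈ ball (0 : ℂ) 1, ‖1 - z‖ < δ →
      1 / 2 ≤ ‖hyperF a b (1 + a + b) z‖ := by
  have hp : Summable fun n => ‖(hypCoeff a b (1 + a + b) n : ℂ)‖ := by
    simpa only [Complex.norm_real] using (summable_hypCoeff ha hb).norm
  obtain ⟨δ, hδ, hnear⟩ := exists_norm_tsum_le_two_mul_norm_tsum_mul_pow hp
  refine ⟨δ, hδ, fun z hz hzδ => ?_⟩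
  have hS : 1 ≤ ∑' n, hypCoeff a b (1 + a + b) n := by
    simpa using (summable_hypCoeff ha hb).le_tsum 0
      fun j _ => (hypCoeff_one_add_add_pos ha hb j).le
  have := hnear z (ball_subset_closedBall hz) hzδ
  rw [← Complex.ofReal_tsum, Complex.norm_real, Real.norm_of_nonneg (by positivity)] at this
  rw [hyperF_eq_tsum]
  linarith

end Assembly

theorem stmt_6 (a b c : ℝ) (ha : 0 < a) (hb : 0 < b) (hc : c = 1 + a + b) :
    ∃ C > (0 : ℝ), ∃ δ ∈ Set.Ioo (0 : ℝ) 1, ∀ z ∈ Metric.ball (0 : ℂ) 1,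
      ‖1 - z‖ < δ →
        hyperF a b c z ≠ 0 ∧
        ‖hyperF (a + 1) b c z / hyperF a b c z +
          (b : ℂ) * Complex.log (1 - z)‖ ≤ C := by
  subst hc
  obtain ⟨δ, hδ, hF_ge⟩ := exists_half_le_norm_hyperF ha hb
  have hD : 0 < ∑' n, |remCoeff a b n| :=
    (summable_abs_remCoeff ha hb).tsum_pos (fun _ => abs_nonneg _) 0 (by simp)
  refine ⟨2 * ∑' n, |remCoeff a b n|, by positivity, δ, hδ, fun z hz hzδ => ?_⟩
  have hF := hF_ge z hz hzδ
  have hF0 : hyperF a b (1 + a + b) z ≠ 0 := norm_pos_iff.mp (by linarith)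
  refine ⟨hF0, ?_⟩
  rw [div_add' _ _ _ hF0, norm_div]
  calc _ ≤ (∑' n, |remCoeff a b n|) / (1 / 2) :=
        div_le_div₀ hD.le (norm_hyperF_add_log_mul_le ha hb (mem_ball_zero_iff.mp hz))
          (by norm_num) hF
    _ = 2 * ∑' n, |remCoeff a b n| := by ring
end

section
/- Let a, b, c be real constants satisfying 1 < a ≤ b ≤ 4, c > 2 and b ≤ c ≤ 2b ≤ 2(1+a). Set τ = (a−1)b/c, p = c − 2 + (1−a)(1−b) and Q(t) = τ(1−a)(1−b) + p(t² − τt). Then S(t) = (p − τ(c−2))·Q(t) − (τ(c−2) − pt)² satisfies S(t) ≥ 0 for every t ∈ [0,1]. -/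
/-! With `d = c - 2` and `m = (1 - a)(1 - b)` we have `p = d + m`, and then `S` factors as
`S(t) = p τ (1 - t) (d t + m - τ d)`. Every factor is nonnegative on `[0, 1]`; for the last one,
`m - τ d = (a - 1)(2b - c)/c`. -/

lemma sub_mul_quadratic_sub_sq_eq_of_eq_add {τ p d m : ℝ} (hp : p = d + m) (t : ℝ) :
    (p - τ * d) * (τ * m + p * (t ^ 2 - τ * t)) - (τ * d - p * t) ^ 2 =
      p * τ * (1 - t) * (d * t + (m - τ * d)) := by
  subst hp
  ring

lemma one_sub_mul_one_sub_sub_mul_eq_div {a b c τ : ℝ} (hc : c ≠ 0) (hτ : τ = (a - 1) * b / c) :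
    (1 - a) * (1 - b) - τ * (c - 2) = (a - 1) * (2 * b - c) / c := by
  subst hτ
  field_simp
  ring

theorem stmt_12_general (a b c : ℝ) (ha : 1 < a) (hab : a ≤ b) (hc2 : 2 < c)
    (hc2b : c ≤ 2 * b)
    (τ p : ℝ) (hτ : τ = (a - 1) * b / c) (hp : p = c - 2 + (1 - a) * (1 - b)) :
    ∀ t ∈ Set.Icc (0 : ℝ) 1,
      0 ≤ (p - τ * (c - 2)) * (τ * (1 - a) * (1 - b) + p * (t ^ 2 - τ * t)) -
        (τ * (c - 2) - p * t) ^ 2 := by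
  rintro t ⟨ht0, ht1⟩
  have hc : 0 < c := by linarith
  have hm : 0 ≤ (1 - a) * (1 - b) := mul_nonneg_of_nonpos_of_nonpos (by linarith) (by linarith)
  have hτ0 : 0 ≤ τ := hτ ▸ div_nonneg (mul_nonneg (by linarith) (by linarith)) hc.le
  have hp0 : 0 ≤ p := by linarith
  have hgap : 0 ≤ (1 - a) * (1 - b) - τ * (c - 2) := by
    rw [one_sub_mul_one_sub_sub_mul_eq_div hc.ne' hτ]
    exact div_nonneg (mul_nonneg (by linarith) (by linarith)) hc.le
  rw [mul_assoc τ, sub_mul_quadratic_sub_sq_eq_of_eq_add hp]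
  have hlin : 0 ≤ (c - 2) * t := mul_nonneg (by linarith) ht0
  exact mul_nonneg (mul_nonneg (mul_nonneg hp0 hτ0) (by linarith)) (by linarith)

theorem stmt_12 (a b c : ℝ) (ha : 1 < a) (hab : a ≤ b) (hb4 : b ≤ 4) (hc2 : 2 < c)
    (hbc : b ≤ c) (hc2b : c ≤ 2 * b) (hba : 2 * b ≤ 2 * (1 + a))
    (τ p : ℝ) (hτ : τ = (a - 1) * b / c) (hp : p = c - 2 + (1 - a) * (1 - b)) :
    ∀ t ∈ Set.Icc (0 : ℝ) 1,
      0 ≤ (p - τ * (c - 2)) * (τ * (1 - a) * (1 - b) + p * (t ^ 2 - τ * t)) -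
        (τ * (c - 2) - p * t) ^ 2 :=
  stmt_12_general a b c ha hab hc2 hc2b τ p hτ hp
end

section
/- Let a, b, c be real constants with a > 0, b > 0 and 1 + a < c ≤ 1 + a + b. Then F(a+1,b;c;x)/F(a,b;c;x) tends to +∞ as the real variable x tends to 1 from the left (x ∈ (0,1)). -/
open Complex Filter MeasureTheory Metric Set
/-- Real-valued Gaussian hypergeometric function for real arguments in (-1,1). -/
noncomputable def hyperFR (a b c x : ℝ) : ℝ :=
  ∑' n : ℕ, ((ascPochhammer ℝ n).eval a * (ascPochhammer ℝ n).eval b /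
      ((ascPochhammer ℝ n).eval c * (n.factorial : ℝ))) * x ^ n

open Topology

/-! Let `B n` and `A n` be the coefficients of `F(a,b;c)` and `F(a+1,b;c)`. Since
`a * A n = (a + n) * B n`, for every `K` we have `A n ≥ K * B n` beyond some `N`, so
`F(a+1,b;c;x) ≥ K * (F(a,b;c;x) - ∑_{n<N} B n)`. This gives a ratio of at least `K / 2` once the
numerator exceeds `K * ∑_{n<N} B n`, which happens near `x = 1` because `∑ A n` diverges: for
`c ≤ 1 + a + b` the sequence `n² B n` is nondecreasing, whence `A n ≥ B 1 / (a n)`. -/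

section PowerSeries

variable {f g : ℕ → ℝ}

theorem tendsto_tsum_mul_pow_atTop (hf : ∀ n, 0 ≤ f n)
    (hfx : ∀ x ∈ Ioo (0 : ℝ) 1, Summable fun n => f n * x ^ n) (hdiv : ¬Summable f) :
    Tendsto (fun x => ∑' n, f n * x ^ n) (𝓝[Ioo 0 1] 1) atTop := by
  refine Filter.tendsto_atTop.2 fun K => ?_
  obtain ⟨N, hN⟩ :=
    (((not_summable_iff_tendsto_nat_atTop_of_nonneg hf).1 hdiv).eventually_gt_atTop K).exists
  have hpoly : Tendsto (fun x : ℝ => ∑ n ∈ Finset.range N, f n * x ^ n) (𝓝[Ioo 0 1] 1)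
      (𝓝 (∑ n ∈ Finset.range N, f n)) := by
    have hcont : Continuous fun x : ℝ => ∑ n ∈ Finset.range N, f n * x ^ n := by fun_prop
    simpa only [one_pow, mul_one] using (hcont.tendsto 1).mono_left nhdsWithin_le_nhds
  filter_upwards [hpoly.eventually_const_lt hN, self_mem_nhdsWithin] with x hKx hx
  exact hKx.le.trans <|
    (hfx x hx).sum_le_tsum _ fun n _ => mul_nonneg (hf n) (pow_nonneg hx.1.le n)

theorem mul_tsum_mul_pow_sub_le (hf : ∀ n, 0 ≤ f n) (hg : ∀ n, 0 ≤ g n) {K : ℝ}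
    (hK : 0 ≤ K) {N : ℕ} (hfg : ∀ n ≥ N, K * g n ≤ f n) {x : ℝ} (hx0 : 0 ≤ x)
    (hx1 : x ≤ 1) (hfx : Summable fun n => f n * x ^ n)
    (hgx : Summable fun n => g n * x ^ n) :
    K * ((∑' n, g n * x ^ n) - ∑ n ∈ Finset.range N, g n) ≤ ∑' n, f n * x ^ n := by
  rw [← hgx.sum_add_tsum_nat_add N, ← hfx.sum_add_tsum_nat_add N]
  have hhead : ∑ n ∈ Finset.range N, g n * x ^ n ≤ ∑ n ∈ Finset.range N, g n :=
    Finset.sum_le_sum fun n _ => mul_le_of_le_one_right (hg n) (pow_le_one₀ hx0 hx1)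
  have htail : K * ∑' k, g (k + N) * x ^ (k + N) ≤ ∑' k, f (k + N) * x ^ (k + N) := by
    rw [← tsum_mul_left]
    refine (((summable_nat_add_iff N).2 hgx).mul_left K).tsum_le_tsum (fun k => ?_)
      ((summable_nat_add_iff N).2 hfx)
    rw [← mul_assoc]
    exact mul_le_mul_of_nonneg_right (hfg _ (Nat.le_add_left N k)) (pow_nonneg hx0 _)
  have hfhead : 0 ≤ ∑ n ∈ Finset.range N, f n * x ^ n :=
    Finset.sum_nonneg fun n _ => mul_nonneg (hf n) (pow_nonneg hx0 n)
  nlinarith [mul_le_mul_of_nonneg_left hhead hK]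

theorem tendsto_tsum_mul_pow_div_tsum_mul_pow_atTop (hf : ∀ n, 0 ≤ f n) (hg : ∀ n, 0 ≤ g n)
    (hg0 : 0 < g 0) (hfx : ∀ x ∈ Ioo (0 : ℝ) 1, Summable fun n => f n * x ^ n)
    (hgx : ∀ x ∈ Ioo (0 : ℝ) 1, Summable fun n => g n * x ^ n) (hdiv : ¬Summable f)
    (hdom : ∀ K, ∀ᶠ n in atTop, K * g n ≤ f n) :
    Tendsto (fun x => (∑' n, f n * x ^ n) / ∑' n, g n * x ^ n) (𝓝[Ioo 0 1] 1) atTop := by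
  rw [(atTop_basis' 0).tendsto_right_iff]
  intro M hM
  obtain ⟨N, hN⟩ := eventually_atTop.1 (hdom (2 * M))
  set C := ∑ n ∈ Finset.range N, g n
  filter_upwards [(tendsto_tsum_mul_pow_atTop hf hfx hdiv).eventually_ge_atTop (2 * M * C),
    self_mem_nhdsWithin] with x hbig hx
  have hpos : 0 < ∑' n, g n * x ^ n := hg0.trans_le <| by
    simpa using (hgx x hx).le_tsum 0 fun n _ => mul_nonneg (hg n) (pow_nonneg hx.1.le n)
  have htail := mul_tsum_mul_pow_sub_le hf hg (by positivity) hN hx.1.le hx.2.le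
    (hfx x hx) (hgx x hx)
  rw [Set.mem_Ici, le_div_iff₀ hpos]
  -- adding `htail` and `hbig` cancels the head `C` of the denominator
  linarith

end PowerSeries

section Hypergeometric

variable {a b c : ℝ}

theorem hyperFR_eq_tsum (x : ℝ) :
    hyperFR a b c x = ∑' n, ordinaryHypergeometricCoefficient a b c n * x ^ n :=
  tsum_congr fun n => by ring

theorem summable_ordinaryHypergeometricCoefficient_mul_pow
    (habc : ∀ kn : ℕ, (kn : ℝ) ≠ -a ∧ (kn : ℝ) ≠ -b ∧ (kn : ℝ) ≠ -c) {x : ℝ}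
    (hx : |x| < 1) :
    Summable fun n => ordinaryHypergeometricCoefficient a b c n * x ^ n := by
  have hx' : x ∈ eball (0 : ℝ) (ordinaryHypergeometricSeries ℝ a b c).radius := by
    rw [ordinaryHypergeometricSeries_radius_eq_one (𝔸 := ℝ) a b c habc, mem_eball_zero_iff]
    simpa [← ofReal_norm] using hx
  have := (ordinaryHypergeometricSeries ℝ a b c).summable hx'
  rw [ordinaryHypergeometricSeries_apply_eq'] at this
  simpa only [smul_eq_mul] using this

theorem ordinaryHypergeometricCoefficient_pos (ha : 0 < a) (hb : 0 < b) (hc : 0 < c) (n : ℕ) :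
    0 < ordinaryHypergeometricCoefficient a b c n := by
  have := ascPochhammer_pos n a ha
  have := ascPochhammer_pos n b hb
  have := ascPochhammer_pos n c hc
  positivity

theorem ordinaryHypergeometricCoefficient_succ (n : ℕ) :
    ordinaryHypergeometricCoefficient a b c (n + 1) =
      ordinaryHypergeometricCoefficient a b c n * ((a + n) * (b + n) / ((c + n) * (n + 1))) := by
  simp only [ordinaryHypergeometricCoefficient, ascPochhammer_succ_eval, Nat.factorial_succ,
    Nat.cast_mul, Nat.cast_succ, div_eq_mul_inv, mul_inv]
  ring

theorem mul_ordinaryHypergeometricCoefficient_add_one_left (n : ℕ) :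
    a * ordinaryHypergeometricCoefficient (a + 1) b c n =
      (a + n) * ordinaryHypergeometricCoefficient a b c n := by
  have h : a * (ascPochhammer ℝ n).eval (a + 1) = (ascPochhammer ℝ n).eval a * (a + n) := by
    rw [← ascPochhammer_succ_eval, ascPochhammer_succ_left]
    simp [Polynomial.eval_comp]
  linear_combination ((n.factorial : ℝ)⁻¹ * (ascPochhammer ℝ n).eval b *
    ((ascPochhammer ℝ n).eval c)⁻¹) * h

theorem monotone_sq_mul_ordinaryHypergeometricCoefficient (ha : 0 < a) (hb : 0 < b) (hc : 0 < c)
    (hcab : c ≤ 1 + a + b) :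
    Monotone fun n : ℕ => (n : ℝ) ^ 2 * ordinaryHypergeometricCoefficient a b c n := by
  refine monotone_nat_of_le_succ fun n => ?_
  have hB := ordinaryHypergeometricCoefficient_pos ha hb hc n
  have hn : (0 : ℝ) ≤ n := n.cast_nonneg
  have hpoly : (n : ℝ) ^ 2 * (c + n) ≤ (n + 1) * ((a + n) * (b + n)) := by
    nlinarith [mul_nonneg (sub_nonneg.2 hcab) (sq_nonneg (n : ℝ)), mul_pos ha hb,
      mul_nonneg (add_pos ha hb).le hn]
  rw [ordinaryHypergeometricCoefficient_succ, Nat.cast_succ,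
    show ((n : ℝ) + 1) ^ 2 * (ordinaryHypergeometricCoefficient a b c n *
        ((a + n) * (b + n) / ((c + n) * (n + 1)))) =
      ordinaryHypergeometricCoefficient a b c n * ((n + 1) * ((a + n) * (b + n))) / (c + n) by
        field_simp,
    le_div_iff₀ (by positivity)]
  nlinarith [mul_le_mul_of_nonneg_left hpoly hB.le]

theorem not_summable_ordinaryHypergeometricCoefficient_add_one_left (ha : 0 < a) (hb : 0 < b)
    (hc : 0 < c) (hcab : c ≤ 1 + a + b) :
    ¬Summable (ordinaryHypergeometricCoefficient (a + 1) b c) := by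
  intro hsum
  set B₁ := ordinaryHypergeometricCoefficient a b c 1
  have hle (n : ℕ) :
      B₁ / a * (n : ℝ)⁻¹ ≤ ordinaryHypergeometricCoefficient (a + 1) b c n := by
    rcases n.eq_zero_or_pos with rfl | hn
    · simp
    have hB := ordinaryHypergeometricCoefficient_pos ha hb hc n
    have hB₁ : B₁ ≤ (n : ℝ) ^ 2 * ordinaryHypergeometricCoefficient a b c n := by
      simpa using monotone_sq_mul_ordinaryHypergeometricCoefficient ha hb hc hcab hn
    rw [show B₁ / a * (n : ℝ)⁻¹ = B₁ / (a * n) by ring, div_le_iff₀ (by positivity)]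
    calc B₁ ≤ (n : ℝ) ^ 2 * ordinaryHypergeometricCoefficient a b c n := hB₁
      _ ≤ n * ((a + n) * ordinaryHypergeometricCoefficient a b c n) := by
        nlinarith [mul_nonneg (mul_nonneg ha.le hB.le) n.cast_nonneg]
      _ = ordinaryHypergeometricCoefficient (a + 1) b c n * (a * n) := by
        rw [← mul_ordinaryHypergeometricCoefficient_add_one_left]; ring
  have hB₁ : 0 < B₁ / a := div_pos (ordinaryHypergeometricCoefficient_pos ha hb hc 1) ha
  refine Real.not_summable_natCast_inv ((summable_mul_left_iff hB₁.ne').1 ?_)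
  exact .of_nonneg_of_le (fun n => by positivity) hle hsum

theorem eventually_mul_le_ordinaryHypergeometricCoefficient_add_one_left (ha : 0 < a)
    (hb : 0 < b) (hc : 0 < c) (K : ℝ) :
    ∀ᶠ n : ℕ in atTop, K * ordinaryHypergeometricCoefficient a b c n ≤
      ordinaryHypergeometricCoefficient (a + 1) b c n := by
  filter_upwards [eventually_ge_atTop ⌈K * a⌉₊] with n hn
  have hKa : K * a ≤ n := Nat.ceil_le.1 hn
  have hB := ordinaryHypergeometricCoefficient_pos ha hb hc n
  refine le_of_mul_le_mul_left ?_ ha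
  rw [mul_ordinaryHypergeometricCoefficient_add_one_left]
  nlinarith [mul_le_mul_of_nonneg_right hKa hB.le, mul_nonneg ha.le hB.le]

end Hypergeometric

theorem stmt_16 (a b c : ℝ) (ha : 0 < a) (hb : 0 < b) (hac : 1 + a < c)
    (hcab : c ≤ 1 + a + b) :
    Tendsto (fun x : ℝ => hyperFR (a + 1) b c x / hyperFR a b c x)
      (nhdsWithin 1 (Set.Ioo 0 1)) atTop := by
  have hc : 0 < c := by linarith
  have hsum : ∀ a' > 0, ∀ x ∈ Ioo (0 : ℝ) 1,
      Summable fun n => ordinaryHypergeometricCoefficient a' b c n * x ^ n := by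
    intro a' ha' x hx
    refine summable_ordinaryHypergeometricCoefficient_mul_pow (fun kn => ?_)
      (abs_lt.2 ⟨by linarith [hx.1], hx.2⟩)
    have := kn.cast_nonneg (α := ℝ)
    exact ⟨by linarith, by linarith, by linarith⟩
  simp only [hyperFR_eq_tsum]
  exact tendsto_tsum_mul_pow_div_tsum_mul_pow_atTop
    (fun n => (ordinaryHypergeometricCoefficient_pos (by linarith) hb hc n).le)
    (fun n => (ordinaryHypergeometricCoefficient_pos ha hb hc n).le)
    (ordinaryHypergeometricCoefficient_pos ha hb hc 0) (hsum _ (by linarith)) (hsum a ha)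
    (not_summable_ordinaryHypergeometricCoefficient_add_one_left ha hb hc hcab)
    (eventually_mul_le_ordinaryHypergeometricCoefficient_add_one_left ha hb hc)
end

section
/- Let a and c be real constants with 0 < a < c. Then lim_{x→+∞} (1+x)^a · F(a+1,a;c;−x) = Γ(c)/(Γ(c−a)Γ(a+1)), where x ranges over the positive reals. -/
open Complex Filter MeasureTheory Metric Set
/-!
Pfaff's transformation `F(a,b;c;z) = (1-z)^(-b) F(c-a,b;c;z/(z-1))`, obtained from Euler's integral
by the substitution `t = s/(1-z+zs)`, turns `(1+x)^a F(a+1,a;c;-x)` into `F(c-a-1,a;c;x/(1+x))`.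
As `x → ∞` the argument `x/(1+x)` tends to `1` from below, and by dominated convergence Euler's
integral converges to `Γ(c)/(Γ(a)Γ(c-a)) ∫₀¹ t^(a-1) dt = Γ(c)/(Γ(c-a)Γ(a+1))`.
-/

open scoped Topology

lemma intervalIntegrable_rpow_mul_one_sub_rpow_zero_half {p q : ℝ} (hp : -1 < p) :
    IntervalIntegrable (fun t : ℝ => t ^ p * (1 - t) ^ q) volume 0 (1 / 2) := by
  refine (intervalIntegral.intervalIntegrable_rpow' hp).mul_continuousOn
    (ContinuousOn.rpow_const (by fun_prop) fun t ht => ?_)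
  rw [uIcc_of_le (by norm_num)] at ht
  exact Or.inl (by linarith [ht.2])

lemma intervalIntegrable_rpow_mul_one_sub_rpow {p q : ℝ} (hp : -1 < p) (hq : -1 < q) :
    IntervalIntegrable (fun t : ℝ => t ^ p * (1 - t) ^ q) volume 0 1 := by
  refine (intervalIntegrable_rpow_mul_one_sub_rpow_zero_half hp).trans ?_
  have := ((intervalIntegrable_rpow_mul_one_sub_rpow_zero_half (q := p) hq).comp_sub_left 1).symm
  simpa only [sub_sub_cancel, sub_zero, mul_comm, show (1:ℝ) - 1 / 2 = 1 / 2 by norm_num]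
    using this

lemma hasDerivAt_pfaff_substitution {z s : ℝ} (hD : 1 - z + z * s ≠ 0) :
    HasDerivAt (fun s : ℝ => s / (1 - z + z * s)) ((1 - z) / (1 - z + z * s) ^ 2) s := by
  refine ((hasDerivAt_id' s).fun_div (((hasDerivAt_id' s).const_mul z).const_add (1 - z)) hD
    ).congr_deriv ?_
  ring

lemma bijOn_pfaff_substitution {z : ℝ} (hz : z < 1) :
    BijOn (fun s : ℝ => s / (1 - z + z * s)) (Ioo 0 1) (Ioo 0 1) := by
  have hw : 0 < 1 - z := by linarith
  refine InvOn.bijOn (f' := fun t => (1 - z) * t / (1 - z * t)) ⟨?_, ?_⟩ ?_ ?_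
  · rintro s ⟨hs0, hs1⟩
    have hD : 0 < 1 - z + z * s := by nlinarith
    have hE : 1 - z * (s / (1 - z + z * s)) = (1 - z) / (1 - z + z * s) := by
      field_simp; ring
    simp only [hE]
    field_simp
  · rintro t ⟨ht0, ht1⟩
    have hE : 0 < 1 - z * t := by nlinarith
    field_simp
    ring
  · rintro s ⟨hs0, hs1⟩
    have hD : 0 < 1 - z + z * s := by nlinarith
    exact ⟨by positivity, by rw [div_lt_one hD]; nlinarith⟩
  · rintro t ⟨ht0, ht1⟩
    have hE : 0 < 1 - z * t := by nlinarith
    exact ⟨by positivity, by rw [div_lt_one hE]; nlinarith⟩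

lemma pfaff_integrand_eq {a b c z s : ℝ} (hz : z < 1) (hs : s ∈ Ioo (0:ℝ) 1) :
    |(1 - z) / (1 - z + z * s) ^ 2| *
      ((s / (1 - z + z * s)) ^ (b - 1) * (1 - s / (1 - z + z * s)) ^ (c - b - 1) *
        (1 - s / (1 - z + z * s) * z) ^ (-a)) =
      (1 - z) ^ (-b) *
        (s ^ (b - 1) * (1 - s) ^ (c - b - 1) * (1 - s * (z / (z - 1))) ^ (-(c - a))) := by
  obtain ⟨hs0, hs1⟩ := hs
  set w := 1 - z
  set D := 1 - z + z * s
  have hw : 0 < w := by linarith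
  have hD : 0 < D := by nlinarith
  have h1 : 1 - s / D = w * (1 - s) / D := by field_simp; ring
  have h2 : 1 - s / D * z = w / D := by field_simp; ring
  have h3 : 1 - s * (z / (z - 1)) = D / w := by
    have : z - 1 ≠ 0 := by linarith
    field_simp; ring
  rw [h1, h2, h3, abs_of_pos (by positivity), Real.div_rpow hs0.le hD.le,
    Real.div_rpow (by nlinarith) hD.le, Real.mul_rpow hw.le (by linarith),
    Real.div_rpow hw.le hD.le, Real.div_rpow hD.le hw.le]
  simp only [Real.rpow_sub hw, Real.rpow_sub hD, Real.rpow_neg hw.le, Real.rpow_neg hD.le,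
    Real.rpow_one]
  field_simp

theorem hyperFE_pfaff {a b c z : ℝ} (hz : z < 1) :
    hyperFE a b c z = (1 - z) ^ (-b) * hyperFE (c - a) b c (z / (z - 1)) := by
  have hφ := bijOn_pfaff_substitution hz
  have key : (∫ t in (0:ℝ)..1, t ^ (b - 1) * (1 - t) ^ (c - b - 1) * (1 - t * z) ^ (-a)) =
      (1 - z) ^ (-b) * ∫ s in (0:ℝ)..1,
        s ^ (b - 1) * (1 - s) ^ (c - b - 1) * (1 - s * (z / (z - 1))) ^ (-(c - a)) := by
    simp only [intervalIntegral.integral_of_le zero_le_one, integral_Ioc_eq_integral_Ioo,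
      ← integral_const_mul]
    conv_lhs => rw [← hφ.image_eq]
    rw [integral_image_eq_integral_abs_deriv_smul measurableSet_Ioo
      (fun s hs => (hasDerivAt_pfaff_substitution (by nlinarith [hs.1, hs.2])).hasDerivWithinAt)
      hφ.injOn]
    exact setIntegral_congr_fun measurableSet_Ioo fun s hs => pfaff_integrand_eq hz hs
  rw [hyperFE, hyperFE, key]
  ring

lemma one_sub_mul_rpow_le {α t w : ℝ} (ht : t ∈ Ioo (0:ℝ) 1) (hw : w ∈ Icc (0:ℝ) 1) :
    (1 - t * w) ^ α ≤ 1 + (1 - t) ^ α := by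
  obtain ⟨ht0, ht1⟩ := ht
  have hlo : 1 - t ≤ 1 - t * w := by nlinarith [hw.2]
  have hhi : 1 - t * w ≤ 1 := by nlinarith [hw.1]
  rcases le_or_gt 0 α with hα | hα
  · have := Real.rpow_le_one (by linarith) hhi hα
    have := Real.rpow_nonneg (by linarith : (0:ℝ) ≤ 1 - t) α
    linarith
  · have := Real.rpow_le_rpow_of_nonpos (by linarith) hlo hα.le
    linarith

theorem tendsto_hyperFE_nhdsLT_one {a b c : ℝ} (hb : 0 < b) (hbc : b < c) (hac : a < c - b) :
    Tendsto (hyperFE a b c) (𝓝[<] 1) (𝓝 (Real.Gamma c / (Real.Gamma b * Real.Gamma (c - b)) *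
      ∫ t in (0:ℝ)..1, t ^ (b - 1) * (1 - t) ^ (c - b - a - 1))) := by
  refine tendsto_const_nhds.mul (intervalIntegral.tendsto_integral_filter_of_dominated_convergence
    (fun t => t ^ (b - 1) * (1 - t) ^ (c - b - 1) + t ^ (b - 1) * (1 - t) ^ (c - b - a - 1))
    (Eventually.of_forall fun w => by fun_prop) ?bound
    ((intervalIntegrable_rpow_mul_one_sub_rpow (by linarith) (by linarith)).add
      (intervalIntegrable_rpow_mul_one_sub_rpow (by linarith) (by linarith))) ?limit)
  case bound =>
    filter_upwards [Ioo_mem_nhdsLT zero_lt_one] with w hw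
    filter_upwards [volume.ae_ne 1] with t ht1 ht
    rw [uIoc_of_le zero_le_one] at ht
    have ht' : t ∈ Ioo (0:ℝ) 1 := ⟨ht.1, lt_of_le_of_ne ht.2 ht1⟩
    have hpos : 0 < 1 - t := by linarith [ht'.2]
    have hP : 0 ≤ t ^ (b - 1) * (1 - t) ^ (c - b - 1) :=
      mul_nonneg (Real.rpow_nonneg ht.1.le _) (Real.rpow_nonneg hpos.le _)
    have hsplit : (1 - t) ^ (c - b - a - 1) = (1 - t) ^ (c - b - 1) * (1 - t) ^ (-a) := by
      rw [← Real.rpow_add hpos]; ring_nf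
    have hQ : 0 ≤ (1 - t * w) ^ (-a) := Real.rpow_nonneg (by nlinarith [hw.2, ht.1]) _
    rw [Real.norm_of_nonneg (mul_nonneg hP hQ), hsplit]
    nlinarith [mul_le_mul_of_nonneg_left
      (one_sub_mul_rpow_le (α := -a) ht' (Ioo_subset_Icc_self hw)) hP]
  case limit =>
    -- at `t = 1` the factor `(1 - w) ^ (-a)` blows up when `0 < a`
    filter_upwards [volume.ae_ne 1] with t ht1 ht
    rw [uIoc_of_le zero_le_one] at ht
    have hpos : 0 < 1 - t := by linarith [lt_of_le_of_ne ht.2 ht1]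
    have hcont : ContinuousAt (fun w : ℝ => (1 - t * w) ^ (-a)) 1 :=
      (continuousAt_const.sub (continuousAt_const.mul continuousAt_id)).rpow_const
        (Or.inl (by simpa using hpos.ne'))
    convert (hcont.tendsto.mono_left (nhdsWithin_le_nhds (s := Iio 1))).const_mul
      (t ^ (b - 1) * (1 - t) ^ (c - b - 1)) using 2
    rw [mul_one, mul_assoc, ← Real.rpow_add hpos]
    ring_nf

lemma tendsto_div_one_add_atTop_nhdsLT_one :
    Tendsto (fun x : ℝ => x / (1 + x)) atTop (𝓝[<] 1) := by
  have h : Tendsto (fun x : ℝ => 1 - (1 + x)⁻¹) atTop (𝓝 (1 - 0)) :=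
    tendsto_const_nhds.sub
      (tendsto_inv_atTop_zero.comp (tendsto_atTop_add_const_left _ 1 tendsto_id))
  rw [sub_zero] at h
  refine tendsto_nhdsWithin_iff.2 ⟨h.congr' ?_, ?_⟩ <;>
    filter_upwards [eventually_gt_atTop (0:ℝ)] with x hx
  · field_simp; ring
  · rw [mem_Iio, div_lt_one (by linarith)]; linarith

theorem stmt_17 (a c : ℝ) (ha : 0 < a) (hac : a < c) :
    Tendsto (fun x : ℝ => (1 + x) ^ a * hyperFE (a + 1) a c (-x))
      atTop (nhds (Real.Gamma c / (Real.Gamma (c - a) * Real.Gamma (a + 1)))) := by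
  have hlim := (tendsto_hyperFE_nhdsLT_one (a := c - a - 1) ha hac (by linarith)).comp
    tendsto_div_one_add_atTop_nhdsLT_one
  have hbeta :
      (∫ t in (0:ℝ)..1, t ^ (a - 1) * (1 - t) ^ (c - a - (c - a - 1) - 1)) = 1 / a := by
    simp only [show c - a - (c - a - 1) - 1 = 0 by ring, Real.rpow_zero, mul_one]
    rw [integral_rpow (Or.inl (by linarith)), sub_add_cancel, Real.one_rpow,
      Real.zero_rpow ha.ne', sub_zero]
  have hval : Real.Gamma c / (Real.Gamma a * Real.Gamma (c - a)) * (1 / a) =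
      Real.Gamma c / (Real.Gamma (c - a) * Real.Gamma (a + 1)) := by
    have := (Real.Gamma_pos_of_pos ha).ne'
    have := (Real.Gamma_pos_of_pos (sub_pos.2 hac)).ne'
    rw [Real.Gamma_add_one ha.ne']
    field_simp
  rw [hbeta, hval] at hlim
  refine hlim.congr' ?_
  filter_upwards [eventually_gt_atTop (0:ℝ)] with x hx
  rw [Function.comp_apply, hyperFE_pfaff (by linarith : -x < 1), sub_neg_eq_add,
    ← mul_assoc, ← Real.rpow_add (by linarith), add_neg_cancel, Real.rpow_zero, one_mul,
    ← neg_add', neg_div_neg_eq, add_comm x, show c - (a + 1) = c - a - 1 by ring]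
end
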